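/- arXiv:1403.4376 — 2 statements merged into one kernel-verified Lean document; each statement's English description precedes it below -/
import Mathlib

section
/- The Schreier family (S₁, d_Δ) embeds isometrically into C([0, ω^ω]): there exists a map φ : S₁ → C([0, ω^ω]) with ‖φ(σ) − φ(τ)‖_∞ = d_Δ(σ,τ) for all σ, τ ∈ S₁. -/
/-!
A Schreier set `B = {m < b₁ < ⋯ < b_k}` (so `k < m`) is coded by the ordinal
`x_B = ω ^ m + ω ^ (m - 1) * b₁ + ⋯ + ω ^ (m - k) * b_k + ω ^ (m - k) ≤ ω ^ ω`, and `∅` by `ω ^ ω`.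
The codes of the Schreier sets having a given nonempty Schreier set `C` as an initial segment
are exactly the codes lying in the clopen interval `I_C = (x_C', x_C]`, where `x_C'` is `x_C`
without its last term `ω ^ (m - k)`. Hence the finite union `K_n` of the `I_C` over Schreier
sets `C` with `max C = n` is clopen and contains `x_B` exactly when `n ∈ B`. With
`e_n = 1 - 2 · 1_{K_n}` and `φ σ = ∑_{n ∈ σ} e_n`, the function `φ σ - φ τ` is bounded by
`|σ ∆ τ|` and attains this value at `x_{τ \ σ}`.
-/

/-- The compact space `[0, α]` of ordinals `≤ α` with the order topology. -/
noncomputable instance (a : Ordinal) : CompactSpace (Set.Iic a) :=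
  isCompact_iff_compactSpace.mp (by rw [← Set.Icc_bot]; exact isCompact_Icc)

/-- The Schreier family `S₁`: finite sets `A` of positive integers with `A = ∅` or
`|A| ≤ min A`; equivalently, `|A| ≤ n` for every `n ∈ A`. -/
def SchreierFamily : Type := {A : Finset ℕ // ∀ n ∈ A, A.card ≤ n}

open Ordinal Set

noncomputable section

theorem isClopen_Ioc_of_succOrder {α : Type*} [LinearOrder α] [TopologicalSpace α] [OrderTopology α]
    [SuccOrder α] [NoMaxOrder α] (a b : α) : IsClopen (Ioc a b) :=
  ⟨Order.Icc_succ_left a b ▸ isClosed_Icc, Order.Ioo_succ_right a b ▸ isOpen_Ioo⟩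

namespace Ordinal

theorem eq_of_mul_add_mem_Ioc {e y a b : Ordinal} (hy : y ∈ Ioc 0 e)
    (h : e * b + y ∈ Ioc (e * a) (e * a + e)) : b = a := by
  rcases lt_trichotomy a b with hab | rfl | hab
  · refine absurd h.2 (not_le.2 ?_)
    calc e * a + e = e * (a + 1) := (mul_add_one e a).symm
      _ ≤ e * b := by gcongr; exact Order.add_one_le_of_lt hab
      _ < e * b + y := lt_add_of_pos_right _ hy.1
  · rfl
  · refine absurd h.1 (not_lt.2 ?_)
    calc e * b + y ≤ e * b + e := by gcongr; exact hy.2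
      _ = e * (b + 1) := (mul_add_one e b).symm
      _ ≤ e * a := by gcongr; exact Order.add_one_le_of_lt hab

theorem omega0_opow_mul_nat_add_lt {c x : Ordinal} (a : ℕ) (hx : x ≤ ω ^ c) :
    ω ^ c * a + x < ω ^ (c + 1) :=
  calc ω ^ c * a + x ≤ ω ^ c * a + ω ^ c := by gcongr
    _ = ω ^ c * (a + 1 : ℕ) := by push_cast; exact (mul_add_one _ _).symm
    _ < ω ^ (c + 1) := opow_mul_lt_opow (natCast_lt_omega0 _) (lt_add_one c)

theorem omega0_opow_add_self_lt {a b : Ordinal} (h : a < b) : ω ^ a + ω ^ a < ω ^ b :=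
  have ha := (opow_lt_opow_iff_right one_lt_omega0).2 h
  isPrincipal_add_omega0_opow b ha ha

theorem eq_of_mem_Ioc_omega0_opow_add_self {m m' : ℕ} {x : Ordinal}
    (h : x ∈ Ioc (ω ^ (m : Ordinal)) (ω ^ (m : Ordinal) + ω ^ (m : Ordinal)))
    (h' : x ∈ Ioc (ω ^ (m' : Ordinal)) (ω ^ (m' : Ordinal) + ω ^ (m' : Ordinal))) : m = m' := by
  by_contra hne
  wlog hlt : m < m' generalizing m m'
  · exact this h' h (Ne.symm hne) (by omega)
  exact (h.2.trans_lt ((omega0_opow_add_self_lt (by exact_mod_cast hlt)).trans h'.1)).false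

end Ordinal

-- The capacity `c` bounds the length of the lists that are coded faithfully: beyond it the
-- exponents are truncated, and the lemmas below assume `l.length ≤ c`.
def lowCode : ℕ → List ℕ → Ordinal
  | c + 1, a :: l => ω ^ (c : Ordinal) * a + lowCode c l
  | _, _ => 0

def listCode (c : ℕ) (l : List ℕ) : Ordinal :=
  lowCode c l + ω ^ ((c - l.length : ℕ) : Ordinal)

@[simp]
theorem lowCode_nil (c : ℕ) : lowCode c [] = 0 := by cases c <;> rfl

@[simp]
theorem lowCode_zero (l : List ℕ) : lowCode 0 l = 0 := by cases l <;> rfl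

@[simp]
theorem listCode_nil (c : ℕ) : listCode c [] = ω ^ (c : Ordinal) := by simp [listCode]

theorem listCode_cons (c a : ℕ) (l : List ℕ) :
    listCode (c + 1) (a :: l) = ω ^ (c : Ordinal) * a + listCode c l := by
  simp [listCode, lowCode, add_assoc]

theorem listCode_append (c : ℕ) (u v : List ℕ) :
    listCode c (u ++ v) = lowCode c u + listCode (c - u.length) v := by
  induction u generalizing c with
  | nil => simp
  | cons a u ih =>
    cases c with
    | zero => simp [listCode]
    | succ c => simp [listCode_cons, lowCode, ih, add_assoc]

theorem listCode_pos (c : ℕ) (l : List ℕ) : 0 < listCode c l :=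
  (opow_pos _ omega0_pos).trans_le le_add_self

theorem listCode_le {c : ℕ} {l : List ℕ} (hl : l.length ≤ c) : listCode c l ≤ ω ^ (c : Ordinal) := by
  induction l generalizing c with
  | nil => simp
  | cons a l ih =>
    obtain ⟨c, rfl⟩ : ∃ c', c = c' + 1 := Nat.exists_eq_add_one.2 (by simp at hl; omega)
    rw [listCode_cons, Nat.cast_succ]
    exact (omega0_opow_mul_nat_add_lt a (ih (by simpa using hl))).le

theorem listCode_mem_Ioc_iff {c : ℕ} {s t : List ℕ} (hs : s.length ≤ c) (ht : t.length ≤ c) :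
    listCode c t ∈ Ioc (lowCode c s) (listCode c s) ↔ s <+: t := by
  refine ⟨fun h => ?_, ?_⟩
  · induction s generalizing c t with
    | nil => exact List.nil_prefix
    | cons a s ih =>
      obtain ⟨c, rfl⟩ : ∃ c', c = c' + 1 := Nat.exists_eq_add_one.2 (by simp at hs; omega)
      simp only [List.length_cons, Nat.add_le_add_iff_right] at hs
      rw [listCode_cons, lowCode] at h
      cases t with
      | nil =>
        rw [listCode_nil, Nat.cast_succ] at h
        exact absurd h.2 (not_le.2 (omega0_opow_mul_nat_add_lt a (listCode_le hs)))
      | cons b t =>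
        simp only [List.length_cons, Nat.add_le_add_iff_right] at ht
        rw [listCode_cons] at h
        obtain rfl : b = a := Nat.cast_injective (eq_of_mul_add_mem_Ioc
          ⟨listCode_pos c t, listCode_le ht⟩
          ⟨le_self_add.trans_lt h.1, h.2.trans (add_le_add_right (listCode_le hs) _)⟩)
        simp only [mem_Ioc, add_lt_add_iff_left, add_le_add_iff_left] at h
        exact List.cons_prefix_cons.2 ⟨rfl, ih hs ht h⟩
  · rintro ⟨v, rfl⟩
    rw [listCode_append]
    exact ⟨lt_add_of_pos_right _ (listCode_pos _ _),
      add_le_add_right (listCode_le (by simp at ht; omega)) _⟩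

def IsSchreierList (L : List ℕ) : Prop := ∀ n ∈ L, L.length ≤ n

theorem IsSchreierList.length_tail_le {m : ℕ} {l : List ℕ} (h : IsSchreierList (m :: l)) :
    l.length ≤ m := by
  have := h m List.mem_cons_self
  simp at this; omega

def schreierCode : List ℕ → Ordinal
  | [] => ω ^ ω
  | m :: l => ω ^ (m : Ordinal) + listCode m l

def schreierInterval : List ℕ → Set Ordinal
  | [] => ∅
  | m :: l => Ioc (ω ^ (m : Ordinal) + lowCode m l) (ω ^ (m : Ordinal) + listCode m l)

theorem isClopen_schreierInterval (L : List ℕ) : IsClopen (schreierInterval L) := by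
  cases L with
  | nil => exact isClopen_empty
  | cons m l => exact isClopen_Ioc_of_succOrder _ _

theorem schreierCode_cons_mem_Ioc {m : ℕ} {l : List ℕ} (hl : l.length ≤ m) :
    schreierCode (m :: l) ∈ Ioc (ω ^ (m : Ordinal)) (ω ^ (m : Ordinal) + ω ^ (m : Ordinal)) :=
  ⟨lt_add_of_pos_right _ (listCode_pos m l), add_le_add_right (listCode_le hl) _⟩

theorem schreierInterval_cons_subset {m : ℕ} {l : List ℕ} (hl : l.length ≤ m) :
    schreierInterval (m :: l) ⊆ Ioc (ω ^ (m : Ordinal)) (ω ^ (m : Ordinal) + ω ^ (m : Ordinal)) :=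
  Ioc_subset_Ioc le_self_add (add_le_add_right (listCode_le hl) _)

theorem schreierCode_le {L : List ℕ} (hL : IsSchreierList L) : schreierCode L ≤ ω ^ ω := by
  cases L with
  | nil => exact le_rfl
  | cons m l => exact ((schreierCode_cons_mem_Ioc hL.length_tail_le).2.trans_lt
      (omega0_opow_add_self_lt (natCast_lt_omega0 m))).le

theorem schreierCode_mem_schreierInterval_iff {L M : List ℕ} (hL : IsSchreierList L)
    (hM : IsSchreierList M) : schreierCode L ∈ schreierInterval M ↔ M ≠ [] ∧ M <+: L := by
  cases M with
  | nil => simp [schreierInterval]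
  | cons m' l' =>
    have hl' := hM.length_tail_le
    cases L with
    | nil =>
      refine iff_of_false (fun h => ?_) (by simp)
      exact ((schreierInterval_cons_subset hl' h).2.trans_lt
        (omega0_opow_add_self_lt (natCast_lt_omega0 m'))).false
    | cons m l =>
      have hl := hL.length_tail_le
      rw [List.cons_prefix_cons]
      refine ⟨fun h => ?_, ?_⟩
      · obtain rfl := eq_of_mem_Ioc_omega0_opow_add_self (schreierCode_cons_mem_Ioc hl)
          (schreierInterval_cons_subset hl' h)
        simp only [schreierCode, schreierInterval, mem_Ioc, add_lt_add_iff_left,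
          add_le_add_iff_left] at h
        exact ⟨List.cons_ne_nil _ _, rfl, (listCode_mem_Ioc_iff hl' hl).1 h⟩
      · rintro ⟨-, rfl, h⟩
        simpa only [schreierCode, schreierInterval, mem_Ioc, add_lt_add_iff_left,
          add_le_add_iff_left] using (listCode_mem_Ioc_iff hl' hl).2 h

theorem Finset.sort_filter_le_prefix {α : Type*} [LinearOrder α] (s : Finset α) (a : α) :
    (s.filter (· ≤ a)).sort <+: s.sort := by
  refine ⟨(s.filter (¬ · ≤ a)).sort, List.Perm.eq_of_pairwise' (r := (· ≤ ·)) ?_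
    (s.pairwise_sort _) ?_⟩
  · refine List.pairwise_append.2 ⟨pairwise_sort _ _, pairwise_sort _ _, fun x hx y hy => ?_⟩
    simp only [mem_sort, mem_filter] at hx hy
    exact (hx.2.trans (not_le.1 hy.2).le)
  · rw [← Multiset.coe_eq_coe, ← Multiset.coe_add, sort_eq, sort_eq, sort_eq, filter_val,
      filter_val]
    exact Multiset.filter_add_not _ _

theorem isSchreierList_sort {B : Finset ℕ} (hB : ∀ n ∈ B, B.card ≤ n) :
    IsSchreierList B.sort := by
  simpa [IsSchreierList] using hB

def schreierSlice (n : ℕ) : Set Ordinal :=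
  ⋃ C ∈ (Finset.range (n + 1)).powerset.filter (fun C => n ∈ C ∧ ∀ a ∈ C, C.card ≤ a),
    schreierInterval C.sort

theorem isClopen_schreierSlice (n : ℕ) : IsClopen (schreierSlice n) :=
  isClopen_biUnion_finset fun _ _ => isClopen_schreierInterval _

theorem schreierCode_sort_mem_schreierSlice_iff {B : Finset ℕ} (hB : ∀ n ∈ B, B.card ≤ n)
    {n : ℕ} : schreierCode B.sort ∈ schreierSlice n ↔ n ∈ B := by
  simp only [schreierSlice, mem_iUnion, Finset.mem_filter, Finset.mem_powerset, exists_prop]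
  constructor
  · rintro ⟨C, ⟨-, hnC, hC⟩, h⟩
    have hpre := ((schreierCode_mem_schreierInterval_iff (isSchreierList_sort hB)
      (isSchreierList_sort hC)).1 h).2
    exact (Finset.mem_sort _).1 (hpre.subset ((Finset.mem_sort _).2 hnC))
  · intro hn
    have hC : ∀ a ∈ B.filter (· ≤ n), (B.filter (· ≤ n)).card ≤ a := fun a ha =>
      (Finset.card_filter_le _ _).trans (hB a (Finset.mem_of_mem_filter a ha))
    refine ⟨B.filter (· ≤ n), ⟨fun a ha => ?_, Finset.mem_filter.2 ⟨hn, le_rfl⟩, hC⟩,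
      (schreierCode_mem_schreierInterval_iff (isSchreierList_sort hB)
        (isSchreierList_sort hC)).2 ⟨?_, B.sort_filter_le_prefix n⟩⟩
    · exact Finset.mem_range.2 (Nat.lt_succ_of_le (Finset.mem_filter.1 ha).2)
    · exact List.ne_nil_of_mem ((Finset.mem_sort _).2 (Finset.mem_filter.2 ⟨hn, le_rfl⟩))

open Classical in
def clopenSign {X : Type*} [TopologicalSpace X] {U : Set X} (hU : IsClopen U) : C(X, ℝ) where
  toFun x := if x ∈ U then -1 else 1
  continuous_toFun := continuous_const.if (by simp [hU.frontier_eq]) continuous_const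

section clopenSign

variable {X : Type*} [TopologicalSpace X] {U : Set X} (hU : IsClopen U) {x : X}

theorem clopenSign_apply_of_mem (hx : x ∈ U) : clopenSign hU x = -1 := by
  simp [clopenSign, hx]

theorem clopenSign_apply_of_notMem (hx : x ∉ U) : clopenSign hU x = 1 := by
  simp [clopenSign, hx]

theorem norm_clopenSign_le [CompactSpace X] : ‖clopenSign hU‖ ≤ 1 :=
  (ContinuousMap.norm_le _ zero_le_one).2 fun x => by
    by_cases hx : x ∈ U <;> simp [clopenSign_apply_of_mem, clopenSign_apply_of_notMem, hx]

end clopenSign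

theorem ContinuousMap.norm_sum_sub_sum_eq_card_symmDiff {X ι : Type*} [TopologicalSpace X]
    [CompactSpace X] [DecidableEq ι] {e : ι → C(X, ℝ)} (he : ∀ i, ‖e i‖ ≤ 1) {s t : Finset ι}
    {x : X} (hs : ∀ i ∈ s \ t, e i x = 1) (ht : ∀ i ∈ t \ s, e i x = -1) :
    ‖∑ i ∈ s, e i - ∑ i ∈ t, e i‖ = (symmDiff s t).card := by
  have hcard : ((symmDiff s t).card : ℝ) = (s \ t).card + (t \ s).card := by
    rw [symmDiff_def, Finset.sup_eq_union, Finset.card_union_of_disjoint disjoint_sdiff_sdiff]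
    push_cast; rfl
  have hx : (∑ i ∈ s \ t, e i - ∑ i ∈ t \ s, e i) x = (s \ t).card + (t \ s).card := by
    simp [Finset.sum_congr rfl hs, Finset.sum_congr rfl ht]
  rw [← Finset.sum_sdiff_sub_sum_sdiff, hcard]
  refine le_antisymm ?_ (hx ▸ (Real.le_norm_self _).trans (norm_coe_le_norm _ x))
  calc ‖∑ i ∈ s \ t, e i - ∑ i ∈ t \ s, e i‖
      ≤ ∑ i ∈ s \ t, ‖e i‖ + ∑ i ∈ t \ s, ‖e i‖ :=
        (norm_sub_le _ _).trans (add_le_add (norm_sum_le _ _) (norm_sum_le _ _))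
    _ ≤ (s \ t).card + (t \ s).card := by
        gcongr <;> exact (Finset.sum_le_sum fun i _ => he i).trans (by simp)

def schreierSign (n : ℕ) : C(Iic (ω ^ ω), ℝ) :=
  clopenSign ((isClopen_schreierSlice n).preimage continuous_subtype_val)

end

/-- The Schreier family `(S₁, d_Δ)` embeds isometrically into `C([0, ω^ω])`. -/
theorem schreier_isometric_C_omega_pow_omega :
    ∃ φ : SchreierFamily → C(↥(Set.Iic (Ordinal.omega0 ^ Ordinal.omega0)), ℝ),
      ∀ σ τ : SchreierFamily,
        ‖φ σ - φ τ‖ = ((symmDiff σ.1 τ.1).card : ℝ) := by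
  refine ⟨fun σ => ∑ n ∈ σ.1, schreierSign n, fun σ τ => ?_⟩
  set B := τ.1 \ σ.1
  have hB : ∀ n ∈ B, B.card ≤ n := fun n hn =>
    (Finset.card_le_card Finset.sdiff_subset).trans (τ.2 n (Finset.mem_sdiff.1 hn).1)
  have hmem {n : ℕ} : schreierCode B.sort ∈ schreierSlice n ↔ n ∈ B :=
    schreierCode_sort_mem_schreierSlice_iff hB
  refine ContinuousMap.norm_sum_sub_sum_eq_card_symmDiff (fun n => norm_clopenSign_le _)
    (x := ⟨schreierCode B.sort, schreierCode_le (isSchreierList_sort hB)⟩) ?_ ?_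
  · intro n hn
    refine clopenSign_apply_of_notMem _ (hmem.not.2 ?_)
    simp [B, (Finset.mem_sdiff.1 hn).1]
  · exact fun n hn => clopenSign_apply_of_mem _ (hmem.2 hn)
end

section
/- Let K be a compact Hausdorff space and suppose that for every ε > 0 there exists a map f : Δ_∞ → C(K) with d_Δ(σ,τ) ≤ ‖f(σ) − f(τ)‖_∞ ≤ (1+ε)·d_Δ(σ,τ) for all σ, τ ∈ Δ_∞ (i.e., Δ_∞ embeds almost isometrically into C(K)). Then the n-th iterated derived set K^(n) is nonempty for every n ∈ ℕ, and consequently the intersection ⋂_{n∈ℕ} K^(n) is nonempty. -/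
/-!
Say `y ∈ T` is a peak of `σ, τ` on `T` with loss `δ` if `|σ ∆ τ| - δ ≤ |f σ y - f τ y|`; peaks
on `K` with loss `0` exist since `K` is compact. Given peaks on `T` for all pairs at distance
`d + 2`, add fresh elements `A t = insert (m + t) σ`, `B s = insert (m + s) τ` and take peaks
`Y t s` of `A t, B s` for `t ≠ s`. They are peaks of `σ, τ` with loss larger by `2ε`, so if there
are infinitely many of them an accumulation point is a peak on the derived set of `T`. If there
are finitely many, a Ramsey argument gives distinct `t, s, u` with `Y t s = Y s u = x` and the same
sign of `f (A t) - f (B s)` and `f (A s) - f (B u)` at `x`; their sum equals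
`(f (A s) - f (B s)) + (f (A t) - f (B u))`, whose norms are at most `(1 + ε) d` and
`(1 + ε) (d + 2)`, a contradiction for small `ε`. With `ε = 1 / (2n + 1)` this can be iterated
`n` times starting from `{0}, ∅`, so `K^(n) ≠ ∅`, and Cantor's intersection theorem applies.
-/

/-- The `n`-th iterated derived set of a topological space `K`, taken inside `K`:
`K^(0) = K` and `K^(n+1)` is the set of accumulation points of `K^(n)` in `K`. -/
def iteratedDerivedSet (K : Type*) [TopologicalSpace K] : ℕ → Set K
  | 0 => Set.univ
  | n + 1 => derivedSet (iteratedDerivedSet K n)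

open Filter Finset
open scoped symmDiff

lemma Ultrafilter.exists_eventually_eq_of_finite {ι α : Type*} {U : Ultrafilter ι} {g : ι → α}
    {S : Set α} (hS : S.Finite) (hg : ∀ᶠ i in U, g i ∈ S) : ∃ a ∈ S, ∀ᶠ i in U, g i = a := by
  obtain ⟨a, ha, hU⟩ := (U.map g).eq_pure_of_finite_mem hS hg
  have hpure : {a} ∈ U.map g := hU ▸ Ultrafilter.mem_pure.2 rfl
  exact ⟨a, ha, hpure⟩

theorem exists_ne_ne_ne_eq_of_finite {ι α : Type*} [Infinite ι] {c : ι → ι → α} {S : Set α}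
    (hS : S.Finite) (hc : ∀ t s, t ≠ s → c t s ∈ S) :
    ∃ t s u, t ≠ s ∧ s ≠ u ∧ t ≠ u ∧ c t s = c s u := by
  let U := hyperfilter ι
  have hne : ∀ t, ∀ᶠ s in (U : Filter ι), s ≠ t := fun t =>
    hyperfilter_le_cofinite (eventually_cofinite_ne t)
  have hlim : ∀ t, ∃ a ∈ S, ∀ᶠ s in U, c t s = a := fun t =>
    Ultrafilter.exists_eventually_eq_of_finite hS ((hne t).mono fun s hs => hc t s hs.symm)
  choose v hvS hv using hlim
  obtain ⟨a, -, ha⟩ := Ultrafilter.exists_eventually_eq_of_finite (U := U) hS (.of_forall hvS)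
  obtain ⟨t, ht⟩ := ha.exists
  obtain ⟨s, hts, hs, hst⟩ := ((hv t).and (ha.and (hne t))).exists
  obtain ⟨u, hsu, hut, hus⟩ := ((hv s).and ((hne t).and (hne s))).exists
  exact ⟨t, s, u, hst.symm, hus.symm, hut.symm, by rw [hts, hsu, ht, hs]⟩

lemma abs_sub_add_abs_sub_le_of_nonneg_iff {α : Type*} [AddCommGroup α] [LinearOrder α]
    [IsOrderedAddMonoid α] {a b c e : α} (h : 0 ≤ a - b ↔ 0 ≤ c - e) :
    |a - b| + |c - e| ≤ |c - b| + |a - e| := by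
  have key : a - b + (c - e) = c - b + (a - e) := by abel
  calc |a - b| + |c - e| = |c - b + (a - e)| := by
        rw [← key, eq_comm, abs_add_eq_add_abs_iff]
        by_cases hab : 0 ≤ a - b
        · exact .inl ⟨hab, h.1 hab⟩
        · exact .inr ⟨(not_le.1 hab).le, (not_le.1 (mt h.2 hab)).le⟩
    _ ≤ |c - b| + |a - e| := abs_add_le _ _

namespace Finset

variable {α : Type*} [DecidableEq α] {a b : α} {s t : Finset α}

lemma insert_symmDiff_self (ha : a ∉ s) : insert a s ∆ s = {a} := by
  ext x; simp only [mem_symmDiff, mem_insert, mem_singleton]; grind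

lemma insert_symmDiff_insert (hs : a ∉ s) (ht : a ∉ t) : insert a s ∆ insert a t = s ∆ t := by
  ext x; simp only [mem_symmDiff, mem_insert]; grind

lemma card_insert_symmDiff_insert (has : a ∉ s) (hat : a ∉ t) (hbs : b ∉ s) (hbt : b ∉ t)
    (hab : a ≠ b) : #(insert a s ∆ insert b t) = #(s ∆ t) + 2 := by
  have : insert a s ∆ insert b t = insert a (insert b (s ∆ t)) := by
    ext x; simp only [mem_symmDiff, mem_insert]; grind
  rw [this, card_insert_of_notMem, card_insert_of_notMem] <;> simp [mem_symmDiff, *]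

end Finset

lemma exists_fresh_pairs (σ τ : Finset ℕ) :
    ∃ A B : ℕ → Finset ℕ, (∀ t, #(A t ∆ σ) = 1) ∧ (∀ s, #(B s ∆ τ) = 1) ∧
      (∀ s, #(A s ∆ B s) = #(σ ∆ τ)) ∧ ∀ t s, t ≠ s → #(A t ∆ B s) = #(σ ∆ τ) + 2 := by
  obtain ⟨m, hm⟩ := (σ ∪ τ).exists_nat_subset_range
  have fresh : ∀ t, m + t ∉ σ ∧ m + t ∉ τ := fun t => by
    simpa [not_or] using fun h => (mem_range.1 (hm h)).not_ge (Nat.le_add_right m t)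
  refine ⟨fun t => insert (m + t) σ, fun s => insert (m + s) τ, fun t => ?_, fun s => ?_,
    fun s => congrArg card (insert_symmDiff_insert (fresh s).1 (fresh s).2), fun t s hts => ?_⟩
  · rw [insert_symmDiff_self (fresh t).1, card_singleton]
  · rw [insert_symmDiff_self (fresh s).2, card_singleton]
  · exact card_insert_symmDiff_insert (fresh t).1 (fresh t).2 (fresh s).1 (fresh s).2
      (by simpa using hts)

section DerivedSet

variable {X : Type*} [TopologicalSpace X]

lemma exists_mem_derivedSet_inter_of_infinite [CompactSpace X] {S T C : Set X}
    (hS : S.Infinite) (hST : S ⊆ T) (hSC : S ⊆ C) (hC : IsClosed C) :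
    (derivedSet T ∩ C).Nonempty := by
  obtain ⟨z, -, hz⟩ := hS.exists_accPt_of_subset_isCompact isCompact_univ (Set.subset_univ S)
  exact ⟨z, derivedSet_mono S T hST hz,
    hC.closure_subset_iff.2 hSC (derivedSet_subset_closure S hz)⟩

lemma isClosed_iteratedDerivedSet [T1Space X] : ∀ n, IsClosed (iteratedDerivedSet X n)
  | 0 => isClosed_univ
  | _ + 1 => isClosed_derivedSet _

lemma iteratedDerivedSet_succ_subset [T1Space X] (n : ℕ) :
    iteratedDerivedSet X (n + 1) ⊆ iteratedDerivedSet X n :=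
  (isClosed_iff_derivedSet_subset _).1 (isClosed_iteratedDerivedSet n)

end DerivedSet

lemma ContinuousMap.abs_apply_sub_apply_le {K : Type*} [TopologicalSpace K] [CompactSpace K]
    (g h : C(K, ℝ)) (x : K) : |g x - h x| ≤ ‖g - h‖ := by
  simpa [Real.dist_eq, dist_eq_norm] using ContinuousMap.dist_apply_le_dist (f := g) (g := h) x

section Peaks

variable {K : Type*} [TopologicalSpace K] {f : Finset ℕ → C(K, ℝ)} {ε δ : ℝ}

def HasPeakOn (f : Finset ℕ → C(K, ℝ)) (T : Set K) (δ : ℝ) (σ τ : Finset ℕ) : Prop :=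
  ∃ y ∈ T, (#(σ ∆ τ) : ℝ) - δ ≤ |f σ y - f τ y|

lemma hasPeakOn_univ [CompactSpace K] (hlow : ∀ σ τ, (#(σ ∆ τ) : ℝ) ≤ ‖f σ - f τ‖)
    (σ τ : Finset ℕ) : HasPeakOn f Set.univ 0 σ τ := by
  have : Nonempty K := by
    by_contra! hK
    have := hlow {0} ∅
    simp [Subsingleton.elim (f {0} - f ∅) 0] at this
  obtain ⟨x, -, hx⟩ := isCompact_univ.exists_isMaxOn Set.univ_nonempty
    (continuous_norm.comp (f σ - f τ).continuous).continuousOn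
  refine ⟨x, Set.mem_univ x, ?_⟩
  have hmax : ‖f σ - f τ‖ ≤ |f σ x - f τ x| :=
    (ContinuousMap.norm_le _ (abs_nonneg _)).2 fun y => hx (Set.mem_univ y)
  linarith [hlow σ τ]

lemma infinite_peakPoints [CompactSpace K] (hup : ∀ σ τ, ‖f σ - f τ‖ ≤ (1 + ε) * #(σ ∆ τ))
    {A B : ℕ → Finset ℕ} {d : ℕ} (hdiag : ∀ s, #(A s ∆ B s) = d)
    (hoff : ∀ t s, t ≠ s → #(A t ∆ B s) = d + 2) (hsmall : δ + ε * (d + 1) < 1)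
    {Y : ℕ → ℕ → K} (hY : ∀ t s, t ≠ s → (d + 2 : ℝ) - δ ≤ |f (A t) (Y t s) - f (B s) (Y t s)|) :
    (Function.uncurry Y '' {p | p.1 ≠ p.2}).Infinite := by
  intro hfin
  let color t s := (Y t s, decide (0 ≤ f (A t) (Y t s) - f (B s) (Y t s)))
  obtain ⟨t, s, u, hts, hsu, htu, hcolor⟩ := exists_ne_ne_ne_eq_of_finite (c := color)
    (hfin.prod (Set.finite_univ (α := Bool))) fun t s hts => ⟨⟨(t, s), hts, rfl⟩, trivial⟩
  simp only [color, Prod.mk.injEq, decide_eq_decide] at hcolor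
  obtain ⟨hx, hsign⟩ := hcolor
  rw [← hx] at hsign
  have hpath := abs_sub_add_abs_sub_le_of_nonneg_iff hsign
  have h₁ := (ContinuousMap.abs_apply_sub_apply_le (f (A s)) (f (B s)) (Y t s)).trans (hup _ _)
  have h₂ := (ContinuousMap.abs_apply_sub_apply_le (f (A t)) (f (B u)) (Y t s)).trans (hup _ _)
  rw [hdiag] at h₁
  rw [hoff t u htu] at h₂
  have hpeak₁ := hY t s hts
  have hpeak₂ := hY s u hsu
  rw [← hx] at hpeak₂
  push_cast at *
  linarith

lemma HasPeakOn.derivedSet [CompactSpace K] (hup : ∀ σ τ, ‖f σ - f τ‖ ≤ (1 + ε) * #(σ ∆ τ))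
    {T : Set K} {σ τ : Finset ℕ} (hsmall : δ + ε * (#(σ ∆ τ) + 1) < 1)
    (hT : ∀ σ' τ', #(σ' ∆ τ') = #(σ ∆ τ) + 2 → HasPeakOn f T δ σ' τ') :
    HasPeakOn f (derivedSet T) (δ + 2 * ε) σ τ := by
  obtain ⟨A, B, hAσ, hBτ, hdiag, hoff⟩ := exists_fresh_pairs σ τ
  obtain ⟨y₀, hy₀, -⟩ := hT (A 0) (B 1) (hoff 0 1 zero_ne_one)
  have hpeak : ∀ t s, ∃ y ∈ T, t ≠ s →
      (#(σ ∆ τ) + 2 : ℝ) - δ ≤ |f (A t) y - f (B s) y| := fun t s => by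
    by_cases hts : t = s
    · exact ⟨y₀, hy₀, absurd hts⟩ -- the diagonal values `Y t t` are never used
    · obtain ⟨y, hyT, hy⟩ := hT (A t) (B s) (hoff t s hts)
      exact ⟨y, hyT, fun _ => by rwa [hoff t s hts, Nat.cast_add, Nat.cast_two] at hy⟩
  choose Y hYT hY using hpeak
  have hfar : ∀ t s, t ≠ s → (#(σ ∆ τ) : ℝ) - (δ + 2 * ε) ≤ |f σ (Y t s) - f τ (Y t s)| := by
    intro t s hts
    have hA := (ContinuousMap.abs_apply_sub_apply_le (f (A t)) (f σ) (Y t s)).trans (hup _ _)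
    have hB := (ContinuousMap.abs_apply_sub_apply_le (f (B s)) (f τ) (Y t s)).trans (hup _ _)
    rw [hAσ] at hA
    rw [hBτ] at hB
    have hpeak := hY t s hts
    have htri₁ := abs_sub_le (f (A t) (Y t s)) (f σ (Y t s)) (f (B s) (Y t s))
    have htri₂ := abs_sub_le (f σ (Y t s)) (f τ (Y t s)) (f (B s) (Y t s))
    rw [abs_sub_comm (f τ _)] at htri₂
    push_cast at *
    linarith
  exact exists_mem_derivedSet_inter_of_infinite (infinite_peakPoints hup hdiag hoff hsmall hY)
    (by rintro _ ⟨⟨t, s⟩, -, rfl⟩; exact hYT t s)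
    (by rintro _ ⟨⟨t, s⟩, hts, rfl⟩; exact hfar t s hts)
    (isClosed_le continuous_const ((f σ).continuous.sub (f τ).continuous).abs)

lemma hasPeakOn_iteratedDerivedSet [CompactSpace K]
    (hlow : ∀ σ τ, (#(σ ∆ τ) : ℝ) ≤ ‖f σ - f τ‖)
    (hup : ∀ σ τ, ‖f σ - f τ‖ ≤ (1 + ε) * #(σ ∆ τ)) (k : ℕ) :
    ∀ σ τ : Finset ℕ, ε * (#(σ ∆ τ) + 2 * k - 1) < 1 →
      HasPeakOn f (iteratedDerivedSet K k) (2 * k * ε) σ τ := by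
  induction k with
  | zero => intro σ τ _; simpa [iteratedDerivedSet] using hasPeakOn_univ hlow σ τ
  | succ k ih =>
    intro σ τ hsmall
    push_cast at hsmall
    rw [show 2 * ((k + 1 : ℕ) : ℝ) * ε = 2 * k * ε + 2 * ε by push_cast; ring]
    exact HasPeakOn.derivedSet hup (by linarith) fun σ' τ' h' =>
      ih σ' τ' (by push_cast [h']; linarith)

end Peaks

/-- If `K` is compact Hausdorff and the infinite Hamming cube `Δ_∞` embeds almost
isometrically into `C(K)`, then every iterated derived set `K^(n)` is nonempty, and
consequently `⋂_n K^(n)` is nonempty. -/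
theorem nonempty_iInter_iteratedDerivedSet_of_hammingCube_ai
    (K : Type*) [TopologicalSpace K] [CompactSpace K] [T2Space K]
    (h : ∀ ε : ℝ, 0 < ε → ∃ f : Finset ℕ → C(K, ℝ),
      ∀ σ τ : Finset ℕ,
        ((symmDiff σ τ).card : ℝ) ≤ ‖f σ - f τ‖ ∧
          ‖f σ - f τ‖ ≤ (1 + ε) * ((symmDiff σ τ).card : ℝ)) :
    (∀ n : ℕ, (iteratedDerivedSet K n).Nonempty) ∧
      (⋂ n : ℕ, iteratedDerivedSet K n).Nonempty := by
  have hne : ∀ n, (iteratedDerivedSet K n).Nonempty := by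
    intro n
    obtain ⟨f, hf⟩ := h (1 / (2 * n + 1)) (by positivity)
    have hsmall : 1 / (2 * n + 1) * (#(({0} : Finset ℕ) ∆ ∅) + 2 * n - 1 : ℝ) < 1 := by
      rw [show #(({0} : Finset ℕ) ∆ ∅) = 1 from rfl, div_mul_eq_mul_div, div_lt_one (by positivity)]
      push_cast
      linarith
    obtain ⟨y, hy, -⟩ := hasPeakOn_iteratedDerivedSet (fun σ τ => (hf σ τ).1)
      (fun σ τ => (hf σ τ).2) n {0} ∅ hsmall
    exact ⟨y, hy⟩
  exact ⟨hne, IsCompact.nonempty_iInter_of_sequence_nonempty_isCompact_isClosed _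
    iteratedDerivedSet_succ_subset hne isCompact_univ isClosed_iteratedDerivedSet⟩
end
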